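/- For σ > 0, the function ω ↦ (1 − e^{−ω²σ²})²/(2ω⁴σ²e^{−ω²σ²}) on (0,∞) has infimum σ²/2 as ω → 0⁺, and is strictly greater than σ²/2 for every ω > 0. -/

import Mathlib

/-!
Writing `t = ω²σ²`, one has `(1 - e^{-t})² / e^{-t} = (e^{t/2} - e^{-t/2})² = 4 sinh²(t/2)`,
so the asymptotic variance equals `σ²/2 · (sinh s / s)²` with `s = ω²σ²/2`.
Since `sinh s > s` for `s > 0` and `sinh s / s → sinh' 0 = 1`, both claims follow.
-/

open Filter Topology Real

lemma one_sub_exp_neg_sq_div_exp_neg (t : ℝ) :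
    (1 - exp (-t)) ^ 2 / exp (-t) = (2 * sinh (t / 2)) ^ 2 := by
  have h : exp t = exp (t / 2) ^ 2 := by rw [← exp_nat_mul]; ring_nf
  rw [sinh_eq, exp_neg, exp_neg, h]
  field_simp

lemma tendsto_sinh_div_self : Tendsto (fun s : ℝ => sinh s / s) (𝓝[≠] 0) (𝓝 1) := by
  have h := hasDerivAt_iff_tendsto_slope.mp (hasDerivAt_sinh 0)
  rw [cosh_zero] at h
  refine h.congr fun s => ?_
  simp [slope_def_field]

lemma one_lt_sinh_div_self {s : ℝ} (hs : 0 < s) : 1 < sinh s / s :=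
  (one_lt_div hs).mpr (self_lt_sinh_iff.mpr hs)

lemma gaussian_asv_eq_sinh_div_self (σ ω : ℝ) :
    (1 - exp (-ω ^ 2 * σ ^ 2)) ^ 2 / (2 * ω ^ 4 * σ ^ 2 * exp (-ω ^ 2 * σ ^ 2)) =
      σ ^ 2 / 2 * (sinh (ω ^ 2 * σ ^ 2 / 2) / (ω ^ 2 * σ ^ 2 / 2)) ^ 2 := by
  rcases eq_or_ne (ω * σ) 0 with h | h
  · rcases mul_eq_zero.mp h with rfl | rfl <;> simp
  have key := one_sub_exp_neg_sq_div_exp_neg (ω ^ 2 * σ ^ 2)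
  rw [div_eq_iff (exp_pos _).ne'] at key
  rw [neg_mul, key]
  obtain ⟨hω, hσ⟩ := mul_ne_zero_iff.mp h
  field_simp

/-- Gaussian noise, per-sensor power constraint: the asymptotic variance
`ω ↦ (1 − e^{−ω²σ²})²/(2ω⁴σ²e^{−ω²σ²})` has infimum `σ²/2` as `ω → 0⁺`, and is
strictly greater than `σ²/2` for every `ω > 0`. -/
theorem gaussian_scale_asv_inf (σ : ℝ) (hσ : 0 < σ) :
    Tendsto (fun ω : ℝ =>
        (1 - Real.exp (-ω^2 * σ^2))^2 / (2 * ω^4 * σ^2 * Real.exp (-ω^2 * σ^2)))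
      (nhdsWithin 0 (Set.Ioi 0)) (nhds (σ^2 / 2)) ∧
    ∀ ω : ℝ, 0 < ω →
      σ^2 / 2 <
        (1 - Real.exp (-ω^2 * σ^2))^2 / (2 * ω^4 * σ^2 * Real.exp (-ω^2 * σ^2)) := by
  simp only [gaussian_asv_eq_sinh_div_self]
  refine ⟨?_, fun ω hω => ?_⟩
  · have hs : Tendsto (fun ω : ℝ => ω ^ 2 * σ ^ 2 / 2) (𝓝[>] 0) (𝓝[≠] 0) := by
      refine tendsto_nhdsWithin_of_tendsto_nhds_of_eventually_within _ ?_ ?_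
      · exact (Continuous.tendsto' (by fun_prop) 0 0 (by simp)).mono_left nhdsWithin_le_nhds
      · filter_upwards [self_mem_nhdsWithin] with ω (hω : 0 < ω)
        exact (by positivity : 0 < ω ^ 2 * σ ^ 2 / 2).ne'
    simpa using ((tendsto_sinh_div_self.comp hs).pow 2).const_mul (σ ^ 2 / 2)
  · have h1 := one_lt_sinh_div_self (by positivity : 0 < ω ^ 2 * σ ^ 2 / 2)
    exact lt_mul_of_one_lt_right (by positivity) (one_lt_pow₀ h1 two_ne_zero)
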